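/- arXiv:2001.11614 — 4 statements merged into one kernel-verified Lean document; each statement's English description precedes it below -/
import Mathlib

section
/- Suppose β is a normalized nc truncated tracial sequence of degree 4 with a positive semidefinite, recursively generated moment matrix M₂ of rank 5 satisfying the column relations Y² = 1 + X² and a·1 + d·X² + e·(XY+YX) = 0, for some reals a,d,e not all zero. Then there exist reals b,c,e',f with bf − ce' ≠ 0 such that the transformed sequence β̃_w := L_β(w∘φ), where φ(X,Y) = (bX + cY, e'X + fY), has a moment matrix M̃₂ satisfying the column relation XY + YX = 0 and one of the column relations Y² = 1, X² + Y² = 1, or Y² − X² = 1. -/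
open Matrix BigOperators

/-- Words in the free monoid on two letters `X = 0`, `Y = 1`. -/
abbrev Word : Type := List (Fin 2)

/-- Evaluation of a word at a pair of square matrices (`X ↦ A`, `Y ↦ B`). -/
def wEval {m : Type*} [Fintype m] [DecidableEq m] (A B : Matrix m m ℝ) : Word → Matrix m m ℝ
  | [] => 1
  | i :: w => (if i = (0 : Fin 2) then A else B) * wEval A B w

/-- Normalized trace. -/
noncomputable def nTr {m : Type*} [Fintype m] (A : Matrix m m ℝ) : ℝ :=
  A.trace / (Fintype.card m : ℝ)
/-- `v` is a cyclic permutation of `w`. -/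
def IsCyc (v w : Word) : Prop := ∃ a b : Word, v = a ++ b ∧ w = b ++ a

/-- A truncated tracial sequence of degree `2n`. -/
def IsTracialSeq (n : ℕ) (β : Word → ℝ) : Prop :=
  (∀ v w : Word, w.length ≤ 2 * n → IsCyc v w → β v = β w) ∧
  ∀ w : Word, w.length ≤ 2 * n → β w = β w.reverse

/-- `β` is noncommutative: two words with the same commutative collapse get
different values. -/
def IsNCSeq (n : ℕ) (β : Word → ℝ) : Prop :=
  ∃ v w : Word, v.length ≤ 2 * n ∧ w.length ≤ 2 * n ∧
    v.count 0 = w.count 0 ∧ v.count 1 = w.count 1 ∧ β v ≠ β w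
/-- The seven words of length at most 2, in the order `1, X, Y, X², XY, YX, Y²`. -/
def w7 : Fin 7 → Word := ![[], [0], [1], [0, 0], [0, 1], [1, 0], [1, 1]]

/-- The 7×7 moment matrix `M₂(β)`, indexed by `1, X, Y, X², XY, YX, Y²`. -/
def M2 (β : Word → ℝ) : Matrix (Fin 7) (Fin 7) ℝ :=
  Matrix.of fun i j => β ((w7 i).reverse ++ w7 j)

/-- Index of a word of length at most 2 among the seven words (junk value on
longer words). -/
def idx : Word → Fin 7
  | [] => 0
  | a :: [] => if a = 0 then 1 else 2
  | a :: b :: _ => if a = 0 then (if b = 0 then 3 else 4) else (if b = 0 then 5 else 6)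
/-- Noncommutative polynomials as finitely supported functions on words;
their product (convolution). -/
noncomputable def polyMul (p q : Word →₀ ℝ) : Word →₀ ℝ :=
  p.sum fun v a => q.sum fun w b => Finsupp.single (v ++ w) (a * b)

/-- The (nc) polynomial `p` has degree at most `k`. -/
def PDegLE (p : Word →₀ ℝ) (k : ℕ) : Prop := ∀ w ∈ p.support, w.length ≤ k
/-- Substitution `w ∘ φ` for `φ = (p₁, p₂)`: substitute `p₁` for `X` and `p₂`
for `Y` in the word `w`. -/
noncomputable def substWord (p₁ p₂ : Word →₀ ℝ) : Word → (Word →₀ ℝ)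
  | [] => Finsupp.single [] 1
  | i :: w => polyMul (if i = (0 : Fin 2) then p₁ else p₂) (substWord p₁ p₂ w)

/-- The Riesz functional `L_β`. -/
noncomputable def Lfun (β : Word → ℝ) (p : Word →₀ ℝ) : ℝ :=
  ∑ w ∈ p.support, p w * β w

/-- The degree-one nc polynomial `a + b·X + c·Y`. -/
noncomputable def linPoly (a b c : ℝ) : Word →₀ ℝ :=
  Finsupp.single [] a + Finsupp.single [0] b + Finsupp.single [1] c

/-- The transformed sequence `β̃_w = L_β(w ∘ φ)`. -/
noncomputable def transf (β : Word → ℝ) (p₁ p₂ : Word →₀ ℝ) : Word → ℝ :=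
  fun w => Lfun β (substWord p₁ p₂ w)

/-- Column relation `p(𝕏,𝕐) = 0` in `M₂(β)`. -/
def ColRel2 (β : Word → ℝ) (p : Word →₀ ℝ) : Prop :=
  ∀ v : Word, v.length ≤ 2 → ∑ w ∈ p.support, p w * β (v.reverse ++ w) = 0

/-- `M₂(β)` is recursively generated: whenever `p(𝕏,𝕐)=0` for `p` of degree ≤ 1
and `deg(pq) ≤ 2`, also `(pq)(𝕏,𝕐)=0` and `(qp)(𝕏,𝕐)=0`. -/
def RG2seq (β : Word → ℝ) : Prop :=
  ∀ p q : Word →₀ ℝ, PDegLE p 1 → PDegLE (polyMul p q) 2 → ColRel2 β p →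
    ColRel2 β (polyMul p q) ∧ ColRel2 β (polyMul q p)

/-!
Modulo the relation `Y² = 1 + X²`, the relation `a + d X² + e (XY + YX) = 0` reads
`R := (d - a) X² + e (XY + YX) + a Y² = 0`. The quadratic form `Q(s, t) = L_β((sX + tY)²)` is
positive definite: a null vector `sX + tY` of `M₂` would be a third kernel vector besides the
two column relations, against rank 5. As `L_β(R) = 0` and `R ≠ 0`, the form `R` is indefinite
and factors as `ℓ₁ ℓ₂` over `ℝ`. Writing `Y² - X² = α ℓ₁² + ω ℓ₂² + κ ℓ₁ ℓ₂` and applying `L_β`,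
which gives `L_β(Y² - X²) = β_∅ = 1`, shows that `α` or `ω` is positive, say `ω`. Then
`X̃ = √|α| ℓ₁`, `Ỹ = √ω ℓ₂` satisfy `X̃Ỹ + ỸX̃ ∈ ℝ R` and `Ỹ² + sign(α) X̃² - 1 ∈ ℝ R` modulo
`Y² = 1 + X²`. Column relations of `β` pass to `β̃` along a homogeneous linear substitution,
because each row of `M̃₂` is a linear combination of rows of `M₂`.
-/

def shiftSeq (v : Word) (β : Word → ℝ) : Word → ℝ := fun w => β (v ++ w)

noncomputable def anticommPoly : Word →₀ ℝ :=
  Finsupp.single [0, 1] 1 + Finsupp.single [1, 0] 1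

noncomputable def conicPoly (r : ℝ) : Word →₀ ℝ :=
  Finsupp.single [1, 1] 1 + Finsupp.single [0, 0] r + Finsupp.single [] (-1)

noncomputable def relPoly (a d e : ℝ) : Word →₀ ℝ :=
  Finsupp.single [] a + Finsupp.single [0, 0] d + Finsupp.single [0, 1] e +
    Finsupp.single [1, 0] e

lemma Lfun_eq_linearCombination (β : Word → ℝ) : Lfun β = Finsupp.linearCombination ℝ β := by
  ext p
  simp [Lfun, Finsupp.linearCombination_apply, Finsupp.sum, mul_comm]

@[simp] lemma Lfun_add (β : Word → ℝ) (p q : Word →₀ ℝ) :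
    Lfun β (p + q) = Lfun β p + Lfun β q := by
  simp [Lfun_eq_linearCombination]

@[simp] lemma Lfun_single (β : Word → ℝ) (w : Word) (x : ℝ) :
    Lfun β (Finsupp.single w x) = x * β w := by
  simp [Lfun_eq_linearCombination]

lemma Lfun_mul_add_mul (x y : ℝ) (g h : Word → ℝ) (p : Word →₀ ℝ) :
    Lfun (fun w => x * g w + y * h w) p = x * Lfun g p + y * Lfun h p := by
  simp only [Lfun, mul_add, Finset.sum_add_distrib, Finset.mul_sum]
  congr 1 <;> exact Finset.sum_congr rfl fun _ _ => by ring

@[simp] lemma Lfun_anticommPoly (β : Word → ℝ) : Lfun β anticommPoly = β [0, 1] + β [1, 0] := by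
  simp [anticommPoly]

@[simp] lemma Lfun_conicPoly (β : Word → ℝ) (r : ℝ) :
    Lfun β (conicPoly r) = β [1, 1] + r * β [0, 0] - β [] := by
  simp [conicPoly, -Finsupp.single_neg]
  ring

@[simp] lemma Lfun_relPoly (β : Word → ℝ) (a d e : ℝ) :
    Lfun β (relPoly a d e) = a * β [] + d * β [0, 0] + e * (β [0, 1] + β [1, 0]) := by
  simp [relPoly]
  ring

lemma polyMul_single_left (v : Word) (x : ℝ) (r : Word →₀ ℝ) :
    polyMul (Finsupp.single v x) r = r.sum fun w y => Finsupp.single (v ++ w) (x * y) := by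
  simp [polyMul, Finsupp.sum_single_index]

lemma polyMul_add_left (p q r : Word →₀ ℝ) :
    polyMul (p + q) r = polyMul p r + polyMul q r := by
  unfold polyMul
  rw [Finsupp.sum_add_index] <;> intros <;> simp [add_mul, Finsupp.sum_add]

lemma Lfun_polyMul_single (β : Word → ℝ) (v : Word) (x : ℝ) (r : Word →₀ ℝ) :
    Lfun β (polyMul (Finsupp.single v x) r) = x * Lfun (shiftSeq v β) r := by
  rw [polyMul_single_left, Lfun_eq_linearCombination, map_finsuppSum, Lfun_eq_linearCombination,
    Finsupp.linearCombination_apply, Finsupp.mul_sum]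
  simp [shiftSeq, mul_assoc, -Finsupp.single_mul]

lemma exists_w7_eq (v : Word) (hv : v.length ≤ 2) : ∃ i, w7 i = v := by
  rcases v with _ | ⟨x, _ | ⟨y, _ | ⟨z, v⟩⟩⟩
  · exact ⟨0, rfl⟩
  · fin_cases x
    exacts [⟨1, rfl⟩, ⟨2, rfl⟩]
  · fin_cases x <;> fin_cases y
    exacts [⟨3, rfl⟩, ⟨4, rfl⟩, ⟨5, rfl⟩, ⟨6, rfl⟩]
  · simp at hv

lemma ColRel2.Lfun_shiftSeq_eq_zero {β : Word → ℝ} {q : Word →₀ ℝ} (h : ColRel2 β q)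
    {v : Word} (hv : v.length ≤ 2) : Lfun (shiftSeq v β) q = 0 := by
  have := h v.reverse (by simpa using hv)
  rwa [List.reverse_reverse] at this

lemma colRel2_iff_forall_w7 (β : Word → ℝ) (q : Word →₀ ℝ) :
    ColRel2 β q ↔ ∀ i : Fin 7, Lfun (shiftSeq (w7 i).reverse β) q = 0 := by
  refine ⟨fun h i => h (w7 i) (by fin_cases i <;> simp [w7]), fun h v hv => ?_⟩
  obtain ⟨i, rfl⟩ := exists_w7_eq v hv
  exact h i

lemma M2_apply_eq_shiftSeq (β : Word → ℝ) (i j : Fin 7) :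
    M2 β i j = shiftSeq (w7 i).reverse β (w7 j) := rfl

lemma colRel2_anticommPoly_iff (β : Word → ℝ) :
    ColRel2 β anticommPoly ↔ ∀ i, M2 β i 4 + M2 β i 5 = 0 := by
  simp [colRel2_iff_forall_w7, M2_apply_eq_shiftSeq, w7]

lemma colRel2_conicPoly_iff (β : Word → ℝ) (r : ℝ) :
    ColRel2 β (conicPoly r) ↔ ∀ i, M2 β i 6 + r * M2 β i 3 = M2 β i 0 := by
  simp [colRel2_iff_forall_w7, M2_apply_eq_shiftSeq, w7, sub_eq_zero]

lemma colRel2_relPoly_iff (β : Word → ℝ) (a d e : ℝ) : ColRel2 β (relPoly a d e) ↔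
    ∀ i, a * M2 β i 0 + d * M2 β i 3 + e * (M2 β i 4 + M2 β i 5) = 0 := by
  simp [colRel2_iff_forall_w7, M2_apply_eq_shiftSeq, w7]

section LinearSubstitution

variable (b c e' f : ℝ)

lemma transf_nil (β : Word → ℝ) (p₁ p₂ : Word →₀ ℝ) : transf β p₁ p₂ [] = β [] := by
  simp [transf, substWord]

lemma transf_cons (β : Word → ℝ) (i : Fin 2) (w : Word) :
    transf β (linPoly 0 b c) (linPoly 0 e' f) (i :: w) =
      (if i = 0 then b else e') * transf (shiftSeq [0] β) (linPoly 0 b c) (linPoly 0 e' f) w +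
      (if i = 0 then c else f) * transf (shiftSeq [1] β) (linPoly 0 b c) (linPoly 0 e' f) w := by
  simp only [transf, substWord]
  split_ifs <;> simp [linPoly, polyMul_add_left, Lfun_polyMul_single]

lemma Lfun_shiftSeq_transf_eq_zero (q : Word →₀ ℝ) :
    ∀ (u : Word) (β : Word → ℝ),
      (∀ v : Word, v.length = u.length →
        Lfun (transf (shiftSeq v β) (linPoly 0 b c) (linPoly 0 e' f)) q = 0) →
      Lfun (shiftSeq u (transf β (linPoly 0 b c) (linPoly 0 e' f))) q = 0
  | [], _, h => h [] rfl
  | i :: u, β, h => by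
    have hsplit : shiftSeq (i :: u) (transf β (linPoly 0 b c) (linPoly 0 e' f)) = fun w =>
        (if i = 0 then b else e') *
          shiftSeq u (transf (shiftSeq [0] β) (linPoly 0 b c) (linPoly 0 e' f)) w +
        (if i = 0 then c else f) *
          shiftSeq u (transf (shiftSeq [1] β) (linPoly 0 b c) (linPoly 0 e' f)) w :=
      funext fun w => transf_cons b c e' f β i (u ++ w)
    rw [hsplit, Lfun_mul_add_mul,
      Lfun_shiftSeq_transf_eq_zero q u (shiftSeq [0] β) fun v hv => h (0 :: v) (by simp [hv]),
      Lfun_shiftSeq_transf_eq_zero q u (shiftSeq [1] β) fun v hv => h (1 :: v) (by simp [hv])]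
    ring

lemma colRel2_transf (β : Word → ℝ) (q : Word →₀ ℝ)
    (h : ∀ v : Word, v.length ≤ 2 →
      Lfun (transf (shiftSeq v β) (linPoly 0 b c) (linPoly 0 e' f)) q = 0) :
    ColRel2 (transf β (linPoly 0 b c) (linPoly 0 e' f)) q := fun v hv =>
  Lfun_shiftSeq_transf_eq_zero b c e' f q v.reverse β fun w hw => h w (by simpa [hw] using hv)

variable {β : Word → ℝ} {a d e : ℝ}

lemma Lfun_transf_anticommPoly (hconic : Lfun β (conicPoly (-1)) = 0)
    (hrel : Lfun β (relPoly a d e) = 0) (s : ℝ) (hXX : b * e' = s * (d - a))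
    (hXY : b * f + c * e' = 2 * s * e) (hYY : c * f = s * a) :
    Lfun (transf β (linPoly 0 b c) (linPoly 0 e' f)) anticommPoly = 0 := by
  simp only [Lfun_conicPoly, Lfun_relPoly] at hconic hrel
  simp [transf_cons, transf_nil, shiftSeq]
  linear_combination (2 * β [0, 0]) * hXX + (β [0, 1] + β [1, 0]) * hXY + (2 * β [1, 1]) * hYY +
    (2 * s) * hrel + (2 * s * a) * hconic

lemma Lfun_transf_conicPoly (hconic : Lfun β (conicPoly (-1)) = 0)
    (hrel : Lfun β (relPoly a d e) = 0) (r l : ℝ) (hXX : r * b ^ 2 + e' ^ 2 = l * (d - a) - 1)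
    (hXY : r * b * c + e' * f = l * e) (hYY : r * c ^ 2 + f ^ 2 = 1 + l * a) :
    Lfun (transf β (linPoly 0 b c) (linPoly 0 e' f)) (conicPoly r) = 0 := by
  simp only [Lfun_conicPoly, Lfun_relPoly] at hconic hrel
  simp [transf_cons, transf_nil, shiftSeq]
  linear_combination β [0, 0] * hXX + (β [0, 1] + β [1, 0]) * hXY + β [1, 1] * hYY +
    l * hrel + (1 + l * a) * hconic

lemma colRel2_transf_anticommPoly (hconic : ColRel2 β (conicPoly (-1)))
    (hrel : ColRel2 β (relPoly a d e)) (s : ℝ) (hXX : b * e' = s * (d - a))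
    (hXY : b * f + c * e' = 2 * s * e) (hYY : c * f = s * a) :
    ColRel2 (transf β (linPoly 0 b c) (linPoly 0 e' f)) anticommPoly :=
  colRel2_transf b c e' f β _ fun _ hv => Lfun_transf_anticommPoly b c e' f
    (hconic.Lfun_shiftSeq_eq_zero hv) (hrel.Lfun_shiftSeq_eq_zero hv) s hXX hXY hYY

lemma colRel2_transf_conicPoly (hconic : ColRel2 β (conicPoly (-1)))
    (hrel : ColRel2 β (relPoly a d e)) (r l : ℝ) (hXX : r * b ^ 2 + e' ^ 2 = l * (d - a) - 1)
    (hXY : r * b * c + e' * f = l * e) (hYY : r * c ^ 2 + f ^ 2 = 1 + l * a) :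
    ColRel2 (transf β (linPoly 0 b c) (linPoly 0 e' f)) (conicPoly r) :=
  colRel2_transf b c e' f β _ fun _ hv => Lfun_transf_conicPoly b c e' f
    (hconic.Lfun_shiftSeq_eq_zero hv) (hrel.Lfun_shiftSeq_eq_zero hv) r l hXX hXY hYY

end LinearSubstitution

lemma Matrix.rank_add_card_le_of_mulVec_eq_zero {K m n ι : Type*} [Field K] [Fintype m]
    [Fintype n] [Fintype ι] (M : Matrix m n K) {v : ι → n → K} (hv : LinearIndependent K v)
    (hker : ∀ i, M *ᵥ v i = 0) : M.rank + Fintype.card ι ≤ Fintype.card n := by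
  have hspan : Submodule.span K (Set.range v) ≤ LinearMap.ker M.mulVecLin :=
    Submodule.span_le.mpr (by rintro _ ⟨i, rfl⟩; exact hker i)
  have hdim := Submodule.finrank_mono hspan
  rw [finrank_span_eq_card hv] at hdim
  have h := LinearMap.finrank_range_add_finrank_ker M.mulVecLin
  rw [Module.finrank_fintype_fun_eq_card] at h
  exact h ▸ Nat.add_le_add_left hdim M.rank

lemma linearIndependent_linear_conic_rel {s t a d e : ℝ} (hst : s ≠ 0 ∨ t ≠ 0)
    (hade : ¬(a = 0 ∧ d = 0 ∧ e = 0)) :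
    LinearIndependent ℝ
      ![![0, s, t, 0, 0, 0, 0], ![-1, 0, 0, -1, 0, 0, 1], ![a, 0, 0, d, e, e, 0]] := by
  rw [Fintype.linearIndependent_iff]
  intro g hg
  have h0 := congrFun hg 0
  have h1 := congrFun hg 1
  have h2 := congrFun hg 2
  have h3 := congrFun hg 3
  have h4 := congrFun hg 4
  have h6 := congrFun hg 6
  simp [Fin.sum_univ_three] at h0 h1 h2 h3 h4 h6
  have hg0 : g 0 = 0 := hst.elim h1.resolve_right h2.resolve_right
  have hg2 : g 2 = 0 := by
    by_contra hg2
    rw [h6] at h0 h3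
    exact hade ⟨by simpa [hg2] using h0, by simpa [hg2] using h3, h4.resolve_left hg2⟩
  intro i
  fin_cases i <;> assumption

lemma quadForm_pos_of_rank_eq_five {β : Word → ℝ} (hpsd : (M2 β).PosSemidef)
    (hrank : (M2 β).rank = 5) {a d e : ℝ} (hade : ¬(a = 0 ∧ d = 0 ∧ e = 0))
    (hconic : ∀ i : Fin 7, M2 β i 6 = M2 β i 0 + M2 β i 3)
    (hrel : ∀ i : Fin 7, a * M2 β i 0 + d * M2 β i 3 + e * (M2 β i 4 + M2 β i 5) = 0)
    {s t : ℝ} (hst : s ≠ 0 ∨ t ≠ 0) :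
    0 < β [0, 0] * s ^ 2 + (β [0, 1] + β [1, 0]) * s * t + β [1, 1] * t ^ 2 := by
  set u : Fin 7 → ℝ := ![0, s, t, 0, 0, 0, 0]
  have hquad : u ⬝ᵥ M2 β *ᵥ u =
      β [0, 0] * s ^ 2 + (β [0, 1] + β [1, 0]) * s * t + β [1, 1] * t ^ 2 := by
    simp [u, dotProduct, mulVec, Fin.sum_univ_seven, M2, w7]
    ring
  have hnonneg := hpsd.dotProduct_mulVec_nonneg u
  simp only [star_trivial, hquad] at hnonneg
  refine lt_of_le_of_ne hnonneg fun hzero => ?_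
  have hu : M2 β *ᵥ u = 0 :=
    (hpsd.dotProduct_mulVec_zero_iff u).mp (by rw [star_trivial, hquad, hzero])
  have hv₁ : M2 β *ᵥ ![-1, 0, 0, -1, 0, 0, 1] = 0 := funext fun i => by
    simp [mulVec, dotProduct, Fin.sum_univ_seven]
    linear_combination hconic i
  have hv₂ : M2 β *ᵥ ![a, 0, 0, d, e, e, 0] = 0 := funext fun i => by
    simp [mulVec, dotProduct, Fin.sum_univ_seven]
    linear_combination hrel i
  have hdim := (M2 β).rank_add_card_le_of_mulVec_eq_zero
    (linearIndependent_linear_conic_rel hst hade) (by intro i; fin_cases i <;> assumption)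
  simp [hrank] at hdim

lemma discr_pos_of_quadForm_pos {a d e p q r : ℝ} (hade : ¬(a = 0 ∧ d = 0 ∧ e = 0))
    (hpos : ∀ s t : ℝ, s ≠ 0 ∨ t ≠ 0 → 0 < p * s ^ 2 + q * s * t + r * t ^ 2)
    (horth : (d - a) * p + e * q + a * r = 0) : 0 < e ^ 2 - (d - a) * a := by
  have hr : 0 < r := by simpa using hpos 0 1 (Or.inr one_ne_zero)
  by_cases hR : d - a = 0 ∧ e = 0
  · have ha : a ≠ 0 := fun ha => hade ⟨ha, by linarith [hR.1], hR.2⟩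
    rw [hR.1, hR.2] at horth
    exact absurd (by linarith : a * r = 0) (mul_ne_zero ha hr.ne')
  · have hval : p * (d - a) ^ 2 + q * (d - a) * e + r * e ^ 2 = (e ^ 2 - (d - a) * a) * r := by
      linear_combination (d - a) * horth
    exact pos_of_mul_pos_left (hval ▸ hpos (d - a) e (not_and_or.mp hR)) hr.le

lemma exists_factorization_of_discr_pos {A B C : ℝ} (h : 0 < B ^ 2 - A * C) :
    ∃ b₁ c₁ b₂ c₂ : ℝ, b₁ * b₂ = A ∧ b₁ * c₂ + c₁ * b₂ = 2 * B ∧ c₁ * c₂ = C ∧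
      b₁ * c₂ - c₁ * b₂ ≠ 0 := by
  rcases eq_or_ne A 0 with rfl | hA
  · have hB : B ≠ 0 := by rintro rfl; simp at h
    exact ⟨0, 1, 2 * B, C, by ring, by ring, by ring, by simpa using hB⟩
  · set δ := √(B ^ 2 - A * C)
    have hδ : δ ^ 2 = B ^ 2 - A * C := Real.sq_sqrt h.le
    refine ⟨1, (B - δ) / A, A, B + δ, by ring, by field_simp; ring, ?_, ?_⟩
    · field_simp
      linear_combination -hδ
    · field_simp
      simpa using (Real.sqrt_pos.2 h).ne'

lemma exists_sign_mul_sq_eq (α : ℝ) :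
    ∃ k l : ℝ, (k = 0 ∨ k = 1 ∨ k = -1) ∧ l ≠ 0 ∧ k * l ^ 2 = α := by
  rcases lt_trichotomy α 0 with h | rfl | h
  · exact ⟨-1, √(-α), by norm_num, (Real.sqrt_pos.2 (neg_pos.2 h)).ne',
      by rw [Real.sq_sqrt (neg_pos.2 h).le]; ring⟩
  · exact ⟨0, 1, by norm_num, one_ne_zero, by ring⟩
  · exact ⟨1, √α, by norm_num, (Real.sqrt_pos.2 h).ne', by rw [Real.sq_sqrt h.le]; ring⟩

/-- With `R(x, y) = (d - a) x² + 2 e x y + a y²`, which is `a + d x² + e (x y + y x)` reduced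
modulo `y² = 1 + x²`, this says that `(b x + c y)(e' x + f y)` is a multiple of `R` and that
`k (b x + c y)² + (e' x + f y)²` is `y² - x²` plus a multiple of `R`. -/
def IsNormalizingSubst (a d e b c e' f k : ℝ) : Prop :=
  (∃ s, b * e' = s * (d - a) ∧ b * f + c * e' = 2 * s * e ∧ c * f = s * a) ∧
  ∃ l, k * b ^ 2 + e' ^ 2 = l * (d - a) - 1 ∧ k * b * c + e' * f = l * e ∧
    k * c ^ 2 + f ^ 2 = 1 + l * a
lemma exists_isNormalizingSubst_of_factorization {a d e b₁ c₁ b₂ c₂ : ℝ}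
    (hXX : b₁ * b₂ = d - a) (hXY : b₁ * c₂ + c₁ * b₂ = 2 * e) (hYY : c₁ * c₂ = a)
    (hdet : b₁ * c₂ - c₁ * b₂ ≠ 0) (hpos : 0 < b₁ ^ 2 - c₁ ^ 2) :
    ∃ b c e' f k : ℝ, (k = 0 ∨ k = 1 ∨ k = -1) ∧ b * f - c * e' ≠ 0 ∧
      IsNormalizingSubst a d e b c e' f k := by
  set t := (b₁ * c₂ - c₁ * b₂)⁻¹
  have ht : (b₁ * c₂ - c₁ * b₂) * t = 1 := mul_inv_cancel₀ hdet
  set κ := 2 * (b₁ * b₂ - c₁ * c₂) * t ^ 2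
  obtain ⟨k, l₁, hk, hl₁, hkl₁⟩ := exists_sign_mul_sq_eq ((b₂ ^ 2 - c₂ ^ 2) * t ^ 2)
  have hω : 0 < (b₁ ^ 2 - c₁ ^ 2) * t ^ 2 := by
    have : t ≠ 0 := inv_ne_zero hdet
    positivity
  set l₂ := √((b₁ ^ 2 - c₁ ^ 2) * t ^ 2)
  have hl₂ : l₂ ^ 2 = (b₁ ^ 2 - c₁ ^ 2) * t ^ 2 := Real.sq_sqrt hω.le
  -- `y² - x² + κ ℓ₁ ℓ₂ = k (l₁ ℓ₁)² + (l₂ ℓ₂)²` for `ℓᵢ = bᵢ x + cᵢ y`, coefficientwise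
  have hxx : k * l₁ ^ 2 * b₁ ^ 2 + l₂ ^ 2 * b₂ ^ 2 = κ * (b₁ * b₂) - 1 := by
    rw [hkl₁, hl₂]
    linear_combination (-(b₁ * c₂ - c₁ * b₂) * t - 1) * ht
  have hxy : k * l₁ ^ 2 * (b₁ * c₁) + l₂ ^ 2 * (b₂ * c₂) = κ * (b₁ * c₂ + c₁ * b₂) / 2 := by
    rw [hkl₁, hl₂]
    ring
  have hyy : k * l₁ ^ 2 * c₁ ^ 2 + l₂ ^ 2 * c₂ ^ 2 = 1 + κ * (c₁ * c₂) := by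
    rw [hkl₁, hl₂]
    linear_combination ((b₁ * c₂ - c₁ * b₂) * t + 1) * ht
  refine ⟨l₁ * b₁, l₁ * c₁, l₂ * b₂, l₂ * c₂, k, hk, ?_, ⟨l₁ * l₂, ?_, ?_, ?_⟩, κ, ?_, ?_, ?_⟩
  · rw [show l₁ * b₁ * (l₂ * c₂) - l₁ * c₁ * (l₂ * b₂) = l₁ * l₂ * (b₁ * c₂ - c₁ * b₂) by ring]
    exact mul_ne_zero (mul_ne_zero hl₁ (Real.sqrt_pos.2 hω).ne') hdet
  · linear_combination l₁ * l₂ * hXX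
  · linear_combination l₁ * l₂ * hXY
  · linear_combination l₁ * l₂ * hYY
  · linear_combination hxx + κ * hXX
  · linear_combination hxy + κ / 2 * hXY
  · linear_combination hyy + κ * hYY

lemma exists_isNormalizingSubst {a d e p q r : ℝ} (hade : ¬(a = 0 ∧ d = 0 ∧ e = 0))
    (hpos : ∀ s t : ℝ, s ≠ 0 ∨ t ≠ 0 → 0 < p * s ^ 2 + q * s * t + r * t ^ 2)
    (horth : (d - a) * p + e * q + a * r = 0) (hrp : 0 < r - p) :
    ∃ b c e' f k : ℝ, (k = 0 ∨ k = 1 ∨ k = -1) ∧ b * f - c * e' ≠ 0 ∧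
      IsNormalizingSubst a d e b c e' f k := by
  obtain ⟨b₁, c₁, b₂, c₂, hXX, hXY, hYY, hdet⟩ :=
    exists_factorization_of_discr_pos (discr_pos_of_quadForm_pos hade hpos horth)
  have hℓ : (b₁ ≠ 0 ∨ c₁ ≠ 0) ∧ (b₂ ≠ 0 ∨ c₂ ≠ 0) := by
    constructor <;> by_contra! h0 <;> simp [h0.1, h0.2] at hdet
  have hQ₁ := hpos b₁ c₁ hℓ.1
  have hQ₂ := hpos b₂ c₂ hℓ.2
  -- pair `y² - x²`, written in the basis `ℓ₁², ℓ₂², ℓ₁ ℓ₂`, with the positive definite form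
  have hsplit : (r - p) * (b₁ * c₂ - c₁ * b₂) ^ 2 =
      (b₂ ^ 2 - c₂ ^ 2) * (p * b₁ ^ 2 + q * b₁ * c₁ + r * c₁ ^ 2) +
      (b₁ ^ 2 - c₁ ^ 2) * (p * b₂ ^ 2 + q * b₂ * c₂ + r * c₂ ^ 2) := by
    linear_combination (-2 * (b₁ * b₂ - c₁ * c₂)) * (p * hXX + q / 2 * hXY + r * hYY + horth)
  rcases lt_or_ge 0 (b₁ ^ 2 - c₁ ^ 2) with hω | hω
  · exact exists_isNormalizingSubst_of_factorization hXX hXY hYY hdet hω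
  · have hD : 0 < (b₁ * c₂ - c₁ * b₂) ^ 2 := by positivity
    have hα : 0 < b₂ ^ 2 - c₂ ^ 2 :=
      pos_of_mul_pos_left (by nlinarith [mul_pos hrp hD]) hQ₁.le
    exact exists_isNormalizingSubst_of_factorization (b₁ := b₂) (c₁ := c₂) (b₂ := b₁) (c₂ := c₁)
      (by linear_combination hXX) (by linear_combination hXY) (by linear_combination hYY)
      (by contrapose! hdet; linear_combination -hdet) hα

theorem stmt6_general (β : Word → ℝ) (hnorm : β [] = 1) (hpsd : (M2 β).PosSemidef)
    (hrank : (M2 β).rank = 5) (a d e : ℝ) (hade : ¬(a = 0 ∧ d = 0 ∧ e = 0))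
    (hrel1 : ∀ i : Fin 7, M2 β i 6 = M2 β i 0 + M2 β i 3)
    (hrel2 : ∀ i : Fin 7, a * M2 β i 0 + d * M2 β i 3 + e * (M2 β i 4 + M2 β i 5) = 0) :
    ∃ b c e' f : ℝ, b * f - c * e' ≠ 0 ∧
      (∀ i : Fin 7,
          M2 (transf β (linPoly 0 b c) (linPoly 0 e' f)) i 4 +
            M2 (transf β (linPoly 0 b c) (linPoly 0 e' f)) i 5 = 0) ∧
      ((∀ i : Fin 7, M2 (transf β (linPoly 0 b c) (linPoly 0 e' f)) i 6 =
          M2 (transf β (linPoly 0 b c) (linPoly 0 e' f)) i 0) ∨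
       (∀ i : Fin 7, M2 (transf β (linPoly 0 b c) (linPoly 0 e' f)) i 3 +
          M2 (transf β (linPoly 0 b c) (linPoly 0 e' f)) i 6 =
          M2 (transf β (linPoly 0 b c) (linPoly 0 e' f)) i 0) ∨
       (∀ i : Fin 7, M2 (transf β (linPoly 0 b c) (linPoly 0 e' f)) i 6 -
          M2 (transf β (linPoly 0 b c) (linPoly 0 e' f)) i 3 =
          M2 (transf β (linPoly 0 b c) (linPoly 0 e' f)) i 0)) := by
  have hconic : ColRel2 β (conicPoly (-1)) :=
    (colRel2_conicPoly_iff β (-1)).2 fun i => by linarith [hrel1 i]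
  have hrel : ColRel2 β (relPoly a d e) := (colRel2_relPoly_iff β a d e).2 hrel2
  have hconic₀ := hconic.Lfun_shiftSeq_eq_zero (v := []) (by simp)
  have hrel₀ := hrel.Lfun_shiftSeq_eq_zero (v := []) (by simp)
  simp only [Lfun_conicPoly, Lfun_relPoly, shiftSeq, List.nil_append] at hconic₀ hrel₀
  obtain ⟨b, c, e', f, k, hk, hdet, ⟨s, hs₁, hs₂, hs₃⟩, ⟨l, hl₁, hl₂, hl₃⟩⟩ :=
    exists_isNormalizingSubst hade
      (fun _ _ hst => quadForm_pos_of_rank_eq_five hpsd hrank hade hrel1 hrel2 hst)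
      (by linear_combination hrel₀ + a * hconic₀) (by linarith)
  have hanti := colRel2_transf_anticommPoly b c e' f hconic hrel s hs₁ hs₂ hs₃
  have hk' := (colRel2_conicPoly_iff _ k).1
    (colRel2_transf_conicPoly b c e' f hconic hrel k l hl₁ hl₂ hl₃)
  refine ⟨b, c, e', f, hdet, (colRel2_anticommPoly_iff _).1 hanti, ?_⟩
  rcases hk with rfl | rfl | rfl
  · exact Or.inl fun i => by simpa using hk' i
  · exact Or.inr <| Or.inl fun i => by linarith [hk' i]
  · exact Or.inr <| Or.inr fun i => by linarith [hk' i]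

theorem stmt6 (β : Word → ℝ) (hβ : IsTracialSeq 2 β) (hnorm : β [] = 1)
    (hnc : IsNCSeq 2 β) (hpsd : (M2 β).PosSemidef) (hrg : RG2seq β)
    (hrank : (M2 β).rank = 5) (a d e : ℝ) (hade : ¬(a = 0 ∧ d = 0 ∧ e = 0))
    (hrel1 : ∀ i : Fin 7, M2 β i 6 = M2 β i 0 + M2 β i 3)
    (hrel2 : ∀ i : Fin 7, a * M2 β i 0 + d * M2 β i 3 + e * (M2 β i 4 + M2 β i 5) = 0) :
    ∃ b c e' f : ℝ, b * f - c * e' ≠ 0 ∧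
      (∀ i : Fin 7,
          M2 (transf β (linPoly 0 b c) (linPoly 0 e' f)) i 4 +
            M2 (transf β (linPoly 0 b c) (linPoly 0 e' f)) i 5 = 0) ∧
      ((∀ i : Fin 7, M2 (transf β (linPoly 0 b c) (linPoly 0 e' f)) i 6 =
          M2 (transf β (linPoly 0 b c) (linPoly 0 e' f)) i 0) ∨
       (∀ i : Fin 7, M2 (transf β (linPoly 0 b c) (linPoly 0 e' f)) i 3 +
          M2 (transf β (linPoly 0 b c) (linPoly 0 e' f)) i 6 =
          M2 (transf β (linPoly 0 b c) (linPoly 0 e' f)) i 0) ∨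
       (∀ i : Fin 7, M2 (transf β (linPoly 0 b c) (linPoly 0 e' f)) i 6 -
          M2 (transf β (linPoly 0 b c) (linPoly 0 e' f)) i 3 =
          M2 (transf β (linPoly 0 b c) (linPoly 0 e' f)) i 0)) :=
  stmt6_general β hnorm hpsd hrank a d e hade hrel1 hrel2
end

section
/- Let (X,Y) be a pair of real symmetric 2×2 matrices with Y² = I₂ and Tr(X²Y²) ≠ Tr(XYXY). Then there exist reals a,b,c such that, setting X̃ = [[a,b],[b,c]] and Ỹ = [[1,0],[0,−1]], one has Tr(w(X,Y)) = Tr(w(X̃,Ỹ)) for every word w of length ≤ 4 (hence M₂^{(X,Y)} = M₂^{(X̃,Ỹ)}). Moreover, for any such X̃,Ỹ one has Tr(X̃²Ỹ²) − Tr(X̃ỸX̃Ỹ) = 2b². -/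
open Matrix BigOperators

lemma conj_wEval (Q A B : Matrix (Fin 2) (Fin 2) ℝ) (hQ : Qᵀ * Q = 1) :
    ∀ w : Word, wEval (Qᵀ * A * Q) (Qᵀ * B * Q) w = Qᵀ * wEval A B w * Q := by
  have hQ' : Q * Qᵀ = 1 := mul_eq_one_comm.mp hQ
  have cancel : ∀ C M : Matrix (Fin 2) (Fin 2) ℝ,
      Qᵀ * C * Q * (Qᵀ * M * Q) = Qᵀ * (C * M) * Q := by
    intro C M
    simp only [Matrix.mul_assoc]
    rw [← Matrix.mul_assoc Q Qᵀ, hQ', Matrix.one_mul]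
  intro w
  induction w with
  | nil => simp [wEval, hQ]
  | cons i w ih =>
      by_cases hi : i = 0 <;> simp only [wEval, ih, hi, ite_true, ite_false] <;> rw [cancel]

lemma nTr_conj (Q M : Matrix (Fin 2) (Fin 2) ℝ) (hQ' : Q * Qᵀ = 1) :
    nTr (Qᵀ * M * Q) = nTr M := by
  unfold nTr
  rw [Matrix.trace_mul_cycle, hQ', Matrix.one_mul]

lemma key_lemma (X Y Q : Matrix (Fin 2) (Fin 2) ℝ) (hX : X.IsSymm) (hQ : Qᵀ * Q = 1)
    (hYQ : Qᵀ * Y * Q = !![(1 : ℝ), 0; 0, -1]) :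
    ∃ a b c : ℝ, ∀ w : Word,
      nTr (wEval X Y w) = nTr (wEval !![a, b; b, c] !![(1 : ℝ), 0; 0, -1] w) := by
  have hQ' : Q * Qᵀ = 1 := mul_eq_one_comm.mp hQ
  set M := Qᵀ * X * Q with hMdef
  have hMsymm : Mᵀ = M := by
    rw [hMdef]
    simp [Matrix.transpose_mul, Matrix.mul_assoc, hX.eq]
  refine ⟨M 0 0, M 0 1, M 1 1, fun w => ?_⟩
  have hM : M = !![M 0 0, M 0 1; M 0 1, M 1 1] := by
    have h10 : M 1 0 = M 0 1 := by
      conv_lhs => rw [← hMsymm]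
      rfl
    ext i j
    fin_cases i <;> fin_cases j <;> simp [h10]
  rw [← hM, ← hYQ, hMdef, conj_wEval Q X Y hQ, nTr_conj Q _ hQ']

lemma caseB (Y : Matrix (Fin 2) (Fin 2) ℝ) (p q : ℝ)
    (hY00 : Y 0 0 = p) (hY01 : Y 0 1 = q) (hY10 : Y 1 0 = q) (hY11 : Y 1 1 = -p)
    (e00 : p * p + q * q = 1) (hp : -1 < p) :
    ∃ Q : Matrix (Fin 2) (Fin 2) ℝ, Qᵀ * Q = 1 ∧ Qᵀ * Y * Q = !![(1 : ℝ), 0; 0, -1] := by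
  have h1p : (0:ℝ) < 1 + p := by linarith
  set u := Real.sqrt ((1 + p) / 2) with hu
  have hu2 : u * u = (1 + p) / 2 := Real.mul_self_sqrt (by linarith)
  have hu0 : u ≠ 0 := by positivity
  set v := q / (2 * u) with hv
  have huv : 2 * (u * v) = q := by
    rw [hv]; field_simp
  have hv2 : v * v = (1 - p) / 2 := by
    have h4 : (2 * (u * v)) * (2 * (u * v)) = q * q := by rw [huv]
    have : (1 + p) * (v * v) = (1 + p) * ((1 - p) / 2) := by
      nlinarith [h4, hu2, e00]
    exact mul_left_cancel₀ (by linarith) this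
  refine ⟨!![u, -v; v, u], ?_, ?_⟩
  · ext i j
    fin_cases i <;> fin_cases j <;>
      simp [Matrix.mul_apply, Matrix.transpose_apply, Fin.sum_univ_two, Matrix.vecHead,
        Matrix.vecTail, Matrix.one_apply]
    · linear_combination hu2 + hv2
    · ring
    · ring
    · linear_combination hu2 + hv2
  · ext i j
    fin_cases i <;> fin_cases j <;>
      simp [Matrix.mul_apply, Matrix.transpose_apply, Fin.sum_univ_two, Matrix.vecHead,
        Matrix.vecTail, hY00, hY01, hY10, hY11]
    · linear_combination p * hu2 - p * hv2 + q * huv + e00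
    · linear_combination q * hu2 - q * hv2 - p * huv
    · linear_combination q * hu2 - q * hv2 - p * huv
    · linear_combination -p * hu2 + p * hv2 - q * huv - e00

theorem stmt8 (X Y : Matrix (Fin 2) (Fin 2) ℝ) (hX : X.IsSymm) (hY : Y.IsSymm)
    (hY2 : Y * Y = 1)
    (hΔ : nTr (wEval X Y [0, 0, 1, 1]) ≠ nTr (wEval X Y [0, 1, 0, 1])) :
    (∃ a b c : ℝ, ∀ w : Word, w.length ≤ 4 →
        nTr (wEval X Y w) = nTr (wEval !![a, b; b, c] !![(1 : ℝ), 0; 0, -1] w)) ∧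
    (∀ a b c : ℝ,
        nTr (wEval !![a, b; b, c] !![(1 : ℝ), 0; 0, -1] [0, 0, 1, 1]) -
          nTr (wEval !![a, b; b, c] !![(1 : ℝ), 0; 0, -1] [0, 1, 0, 1]) = 2 * b ^ 2) := by
  constructor
  · -- Part 1
    have h10 : Y 1 0 = Y 0 1 := by
      conv_lhs => rw [← hY.eq]
      rfl
    have e00 : Y 0 0 * Y 0 0 + Y 0 1 * Y 0 1 = 1 := by
      have := congrFun (congrFun hY2 0) 0
      simpa [Matrix.mul_apply, Fin.sum_univ_two, Matrix.one_apply, h10] using this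
    have e01 : Y 0 0 * Y 0 1 + Y 0 1 * Y 1 1 = 0 := by
      have := congrFun (congrFun hY2 0) 1
      simpa [Matrix.mul_apply, Fin.sum_univ_two, Matrix.one_apply] using this
    have e11 : Y 0 1 * Y 0 1 + Y 1 1 * Y 1 1 = 1 := by
      have := congrFun (congrFun hY2 1) 1
      simpa [Matrix.mul_apply, Fin.sum_univ_two, Matrix.one_apply, h10] using this
    -- not the scalar case
    have hcontra : ¬ (Y 0 1 = 0 ∧ Y 0 0 = Y 1 1) := by
      rintro ⟨hq, hpr⟩
      apply hΔ
      simp [wEval, nTr, Matrix.trace, Matrix.diag, Matrix.mul_apply, Fin.sum_univ_two,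
        h10, hq, hpr]
      ring
    have hpr : Y 0 0 + Y 1 1 = 0 := by
      by_contra hne
      have hq0 : Y 0 1 = 0 := by
        have hprod : Y 0 1 * (Y 0 0 + Y 1 1) = 0 := by linear_combination e01
        rcases mul_eq_zero.mp hprod with h | h
        · exact h
        · exact absurd h hne
      have hdif : (Y 0 0 - Y 1 1) * (Y 0 0 + Y 1 1) = 0 := by
        linear_combination e00 - e11
      rcases mul_eq_zero.mp hdif with h | h
      · exact hcontra ⟨hq0, by linarith⟩
      · exact hne h
    have hr : Y 1 1 = -(Y 0 0) := by linarith
    have hple : -1 ≤ Y 0 0 := by nlinarith [e00, sq_nonneg (Y 0 1)]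
    have hQ : ∃ Q : Matrix (Fin 2) (Fin 2) ℝ,
        Qᵀ * Q = 1 ∧ Qᵀ * Y * Q = !![(1 : ℝ), 0; 0, -1] := by
      by_cases hp : Y 0 0 = -1
      · -- Y = diag(-1, 1); conjugate by the swap matrix
        have hq0 : Y 0 1 = 0 := by nlinarith [e00]
        have hr1 : Y 1 1 = 1 := by rw [hr, hp]; norm_num
        refine ⟨!![(0:ℝ), 1; 1, 0], ?_, ?_⟩
        · ext i j
          fin_cases i <;> fin_cases j <;>
            simp [Matrix.mul_apply, Matrix.transpose_apply, Fin.sum_univ_two, Matrix.vecHead,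
              Matrix.vecTail, Matrix.one_apply]
        · ext i j
          fin_cases i <;> fin_cases j <;>
            simp [Matrix.mul_apply, Matrix.transpose_apply, Fin.sum_univ_two, Matrix.vecHead,
              Matrix.vecTail, h10, hp, hq0, hr1]
      · exact caseB Y (Y 0 0) (Y 0 1) rfl rfl h10 hr e00 (lt_of_le_of_ne hple (Ne.symm hp))
    obtain ⟨Q, hQ1, hQ2⟩ := hQ
    obtain ⟨a, b, c, hab⟩ := key_lemma X Y Q hX hQ1 hQ2
    exact ⟨a, b, c, fun w _ => hab w⟩
  · -- Part 2
    intro a b c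
    simp [wEval, nTr, Matrix.trace, Matrix.diag, Matrix.mul_apply, Fin.sum_univ_two,
      Matrix.one_apply]
    ring
end

section
/- Let n ≥ 2, let D ∈ ℝ^{(n−1)×(n−1)} be diagonal, x ∈ ℝ^{n−1}, and define the symmetric n×n matrices X = [[D, x],[xᵗ, 0]] (block form) and Y = [[I_{n−1}, 0],[0, −1]]. Set Δ := Tr(X²Y²) − Tr(XYXY) and assume Δ > 0. Let t > 0, let a,b,c ∈ ℝ with b = √(Δ/(2t)), and set X̃ = [[a,b],[b,c]], Ỹ = [[1,0],[0,−1]]. If M₂^{(X,Y)} − t·M₂^{(X̃,Ỹ)} is positive semidefinite, then c = 0 and a = 4xᵗDx/(nΔ). -/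
open Matrix BigOperators

/-- The 7×7 moment matrix generated by a pair of symmetric matrices `(A,B)`. -/
noncomputable def M2mat {m : Type*} [Fintype m] [DecidableEq m] (A B : Matrix m m ℝ) :
    Matrix (Fin 7) (Fin 7) ℝ :=
  Matrix.of fun i j => nTr (wEval A B ((w7 i).reverse ++ w7 j))

/-- `X = [[D, x],[xᵗ, 0]]`. -/
def XofDx (m : ℕ) (D : Matrix (Fin m) (Fin m) ℝ) (x : Fin m → ℝ) :
    Matrix (Fin (m + 1)) (Fin (m + 1)) ℝ :=
  (Matrix.reindex finSumFinEquiv finSumFinEquiv)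
    (Matrix.fromBlocks D (Matrix.of fun i (_ : Fin 1) => x i)
      (Matrix.of fun (_ : Fin 1) j => x j) (0 : Matrix (Fin 1) (Fin 1) ℝ))

/-- `Y = [[I, 0],[0, −1]]`. -/
def YofD (m : ℕ) : Matrix (Fin (m + 1)) (Fin (m + 1)) ℝ :=
  (Matrix.reindex finSumFinEquiv finSumFinEquiv)
    (Matrix.fromBlocks (1 : Matrix (Fin m) (Fin m) ℝ) 0 0 (-1 : Matrix (Fin 1) (Fin 1) ℝ))

/-!
Test the positive semidefinite matrix `M₂^{(X,Y)} - t M₂^{(X̃,Ỹ)}` on the coefficient vector of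
`X² + r (X - XY)`. Since `Y² = 1` and `Ỹ² = 1`, the resulting quadratic polynomial in `r` has
leading coefficient `Δ - 2t(b² + c²)`, which the choice of `b` turns into `-2tc² ≤ 0`. A quadratic
that is nonnegative everywhere with nonpositive leading coefficient has vanishing leading and
linear coefficients: the first gives `c = 0`, the second `4 xᵗDx / n = 2t a b² = a Δ`.
-/

lemma Matrix.trace_fromBlocks {l n R : Type*} [Fintype l] [Fintype n] [AddCommMonoid R]
    (A : Matrix l l R) (B : Matrix l n R) (C : Matrix n l R) (E : Matrix n n R) :
    (fromBlocks A B C E).trace = A.trace + E.trace := by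
  simp [Matrix.trace, Fintype.sum_sum_type]

lemma Matrix.trace_reindex {k l R : Type*} [Fintype k] [Fintype l] [AddCommMonoid R]
    (e : k ≃ l) (A : Matrix k k R) : (reindex e e A).trace = A.trace :=
  e.symm.sum_comp fun i => A i i

lemma Matrix.reindex_mul_reindex {k l R : Type*} [Fintype k] [Fintype l] [Semiring R]
    (e : k ≃ l) (A B : Matrix k k R) : reindex e e A * reindex e e B = reindex e e (A * B) :=
  submatrix_mul_equiv A B _ _ _

lemma Matrix.trace_replicateRow_mul_replicateCol {n R : Type*} [Fintype n]
    [NonUnitalNonAssocSemiring R] (v w : n → R) :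
    (replicateRow (Fin 1) v * replicateCol (Fin 1) w).trace = v ⬝ᵥ w := by
  simp [Matrix.trace, replicateRow_mul_replicateCol]

lemma nTr_mul_comm {n : Type*} [Fintype n] (P Q : Matrix n n ℝ) : nTr (P * Q) = nTr (Q * P) := by
  rw [nTr, nTr, trace_mul_comm]

section quadraticForm
variable {n : Type*} [Fintype n] [DecidableEq n] (A B : Matrix n n ℝ)

@[simp] lemma wEval_nil : wEval A B [] = 1 := rfl

@[simp] lemma wEval_cons_zero (w : Word) : wEval A B (0 :: w) = A * wEval A B w := rfl

@[simp] lemma wEval_cons_one (w : Word) : wEval A B (1 :: w) = B * wEval A B w := rfl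

/-- `![0, r, 0, 1, -r, 0, 0]` is the coefficient vector of `X² + r (X - XY)`. -/
lemma M2mat_quadratic_form (hB : B * B = 1) (r : ℝ) :
    ![0, r, 0, 1, -r, 0, 0] ⬝ᵥ (M2mat A B *ᵥ ![0, r, 0, 1, -r, 0, 0]) =
      2 * (nTr (A * A) - nTr (A * (A * B))) * r ^ 2 +
      2 * (nTr (A * (A * A)) - nTr (A * (A * (A * B)))) * r + nTr (A * (A * (A * A))) := by
  have hBAA : nTr (B * (A * A)) = nTr (A * (A * B)) := by
    rw [nTr_mul_comm, Matrix.mul_assoc]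
  have hBAAB : nTr (B * (A * (A * B))) = nTr (A * A) := by
    rw [nTr_mul_comm, Matrix.mul_assoc, Matrix.mul_assoc, hB, Matrix.mul_one]
  have hBAAA : nTr (B * (A * (A * A))) = nTr (A * (A * (A * B))) := by
    rw [nTr_mul_comm]
    simp only [Matrix.mul_assoc]
  simp [dotProduct, mulVec, Fin.sum_univ_seven, M2mat, w7, hBAA, hBAAB, hBAAA]
  ring

end quadraticForm

lemma eq_zero_of_nonpos_of_forall_quadratic_nonneg {K L Q : ℝ} (hK : K ≤ 0)
    (h : ∀ r : ℝ, 0 ≤ K * r ^ 2 + L * r + Q) : K = 0 ∧ L = 0 := by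
  have hdisc : discrim K L Q ≤ 0 := discrim_le_zero fun r => by simpa [sq] using h r
  rw [discrim] at hdisc
  have hQ : 0 ≤ Q := by simpa using h 0
  have hK0 : K = 0 := by
    by_contra hne
    have hKneg : K < 0 := lt_of_le_of_ne hK hne
    have hQ0 : Q = 0 := by nlinarith [sq_nonneg L]
    have hL0 : L = 0 := by nlinarith [sq_nonneg L]
    linarith [h 1]
  refine ⟨hK0, ?_⟩
  nlinarith [sq_nonneg L]

section blockModel
variable {m : ℕ} (D : Matrix (Fin m) (Fin m) ℝ) (x : Fin m → ℝ)

lemma nTr_reindex_finSumFinEquiv (P : Matrix (Fin m ⊕ Fin 1) (Fin m ⊕ Fin 1) ℝ) :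
    nTr (reindex finSumFinEquiv finSumFinEquiv P) = P.trace / (m + 1) := by
  rw [nTr, Matrix.trace_reindex, Fintype.card_fin, Nat.cast_add_one]

lemma XofDx_eq_reindex_fromBlocks : XofDx m D x = reindex finSumFinEquiv finSumFinEquiv
    (fromBlocks D (replicateCol (Fin 1) x) (replicateRow (Fin 1) x) 0) := rfl

lemma YofD_mul_self : YofD m * YofD m = 1 := by
  rw [YofD, reindex_mul_reindex, fromBlocks_multiply]
  simp

lemma nTr_XofDx_sq_sub_sq_mul_YofD :
    nTr (XofDx m D x * XofDx m D x) - nTr (XofDx m D x * (XofDx m D x * YofD m)) =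
      2 * (x ⬝ᵥ x) / (m + 1) := by
  simp only [XofDx_eq_reindex_fromBlocks, YofD, reindex_mul_reindex, nTr_reindex_finSumFinEquiv,
    fromBlocks_multiply, Matrix.trace_fromBlocks]
  simp [trace_replicateRow_mul_replicateCol]
  ring

lemma nTr_XofDx_cube_sub_cube_mul_YofD :
    nTr (XofDx m D x * (XofDx m D x * XofDx m D x)) -
      nTr (XofDx m D x * (XofDx m D x * (XofDx m D x * YofD m))) =
      2 * (x ⬝ᵥ D *ᵥ x) / (m + 1) := by
  simp only [XofDx_eq_reindex_fromBlocks, YofD, reindex_mul_reindex, nTr_reindex_finSumFinEquiv,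
    fromBlocks_multiply, Matrix.trace_fromBlocks, Matrix.zero_mul, Matrix.mul_zero, Matrix.mul_one,
    Matrix.mul_neg, add_zero, zero_add, neg_zero, trace_add, trace_neg]
  rw [← replicateCol_mulVec, trace_replicateRow_mul_replicateCol]
  ring

lemma nTr_XofDx_XXYY_sub_XYXY :
    nTr (wEval (XofDx m D x) (YofD m) [0, 0, 1, 1]) -
      nTr (wEval (XofDx m D x) (YofD m) [0, 1, 0, 1]) = 4 * (x ⬝ᵥ x) / (m + 1) := by
  simp only [wEval_cons_zero, wEval_cons_one, wEval_nil, Matrix.mul_one,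
    XofDx_eq_reindex_fromBlocks, YofD, reindex_mul_reindex, nTr_reindex_finSumFinEquiv,
    fromBlocks_multiply, Matrix.trace_fromBlocks, Matrix.zero_mul, Matrix.mul_zero, Matrix.mul_one,
    Matrix.one_mul, Matrix.mul_neg, Matrix.neg_mul, neg_neg, add_zero, zero_add, neg_zero,
    trace_add, trace_neg, trace_replicateRow_mul_replicateCol]
  rw [trace_mul_comm (replicateCol (Fin 1) x), trace_replicateRow_mul_replicateCol]
  ring

end blockModel

section finTwo
variable (a b c : ℝ)

lemma fin_two_diag_one_neg_one_mul_self :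
    !![(1 : ℝ), 0; 0, -1] * !![(1 : ℝ), 0; 0, -1] = 1 := by
  simp [Matrix.one_fin_two]

lemma nTr_fin_two_sq_sub_sq_mul :
    nTr (!![a, b; b, c] * !![a, b; b, c]) -
      nTr (!![a, b; b, c] * (!![a, b; b, c] * !![(1 : ℝ), 0; 0, -1])) = b ^ 2 + c ^ 2 := by
  simp [nTr, Matrix.trace_fin_two_of]
  ring

lemma nTr_fin_two_cube_sub_cube_mul :
    nTr (!![a, b; b, c] * (!![a, b; b, c] * !![a, b; b, c])) -
      nTr (!![a, b; b, c] * (!![a, b; b, c] * (!![a, b; b, c] * !![(1 : ℝ), 0; 0, -1]))) =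
      a * b ^ 2 + 2 * b ^ 2 * c + c ^ 3 := by
  simp [nTr, Matrix.trace_fin_two_of]
  ring

end finTwo

theorem stmt12_general (m : ℕ) (D : Matrix (Fin m) (Fin m) ℝ)
    (x : Fin m → ℝ) (t a b c : ℝ) (ht : 0 < t)
    (hΔpos : 0 < nTr (wEval (XofDx m D x) (YofD m) [0, 0, 1, 1]) -
        nTr (wEval (XofDx m D x) (YofD m) [0, 1, 0, 1]))
    (hb : b = Real.sqrt ((nTr (wEval (XofDx m D x) (YofD m) [0, 0, 1, 1]) -
        nTr (wEval (XofDx m D x) (YofD m) [0, 1, 0, 1])) / (2 * t)))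
    (hpsd : (M2mat (XofDx m D x) (YofD m) -
        t • M2mat !![a, b; b, c] !![(1 : ℝ), 0; 0, -1]).PosSemidef) :
    c = 0 ∧
    a = 4 * (x ⬝ᵥ D.mulVec x) /
        (((m : ℝ) + 1) * (nTr (wEval (XofDx m D x) (YofD m) [0, 0, 1, 1]) -
          nTr (wEval (XofDx m D x) (YofD m) [0, 1, 0, 1]))) := by
  rw [nTr_XofDx_XXYY_sub_XYXY] at hΔpos hb ⊢
  have hn : (0 : ℝ) < m + 1 := by positivity
  have hb2 : 2 * t * b ^ 2 = 4 * (x ⬝ᵥ x) / (m + 1) := by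
    rw [hb, Real.sq_sqrt (by positivity)]
    field_simp
  have hquad (r : ℝ) : 0 ≤ -(2 * t * c ^ 2) * r ^ 2 +
      2 * (2 * (x ⬝ᵥ D *ᵥ x) / (m + 1) - t * (a * b ^ 2 + 2 * b ^ 2 * c + c ^ 3)) * r +
      (nTr (XofDx m D x * (XofDx m D x * (XofDx m D x * XofDx m D x))) -
        t * nTr (!![a, b; b, c] * (!![a, b; b, c] * (!![a, b; b, c] * !![a, b; b, c])))) := by
    have h := hpsd.dotProduct_mulVec_nonneg ![0, r, 0, 1, -r, 0, 0]
    simp only [star_trivial] at h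
    rw [sub_mulVec, dotProduct_sub, smul_mulVec, dotProduct_smul, smul_eq_mul,
      M2mat_quadratic_form _ _ YofD_mul_self, nTr_XofDx_sq_sub_sq_mul_YofD,
      nTr_XofDx_cube_sub_cube_mul_YofD, M2mat_quadratic_form _ _ fin_two_diag_one_neg_one_mul_self,
      nTr_fin_two_sq_sub_sq_mul, nTr_fin_two_cube_sub_cube_mul] at h
    linear_combination h - r ^ 2 * hb2
  obtain ⟨hK, hL⟩ := eq_zero_of_nonpos_of_forall_quadratic_nonneg
    (by nlinarith [sq_nonneg c]) hquad
  have hc : c = 0 := by simpa [ht.ne'] using hK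
  subst hc
  refine ⟨rfl, ?_⟩
  have hs : 0 < 4 * (x ⬝ᵥ x) := (div_pos_iff_of_pos_right hn).1 hΔpos
  rw [mul_div_cancel₀ _ hn.ne', eq_div_iff hs.ne']
  field_simp at hL hb2
  linear_combination -a * hb2 - hL

/-- (Here `n = m + 1` with `m ≥ 1`, so `n ≥ 2`.) -/
theorem stmt12 (m : ℕ) (hm : 1 ≤ m) (D : Matrix (Fin m) (Fin m) ℝ) (hD : D.IsDiag)
    (x : Fin m → ℝ) (t a b c : ℝ) (ht : 0 < t)
    (hΔpos : 0 < nTr (wEval (XofDx m D x) (YofD m) [0, 0, 1, 1]) -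
        nTr (wEval (XofDx m D x) (YofD m) [0, 1, 0, 1]))
    (hb : b = Real.sqrt ((nTr (wEval (XofDx m D x) (YofD m) [0, 0, 1, 1]) -
        nTr (wEval (XofDx m D x) (YofD m) [0, 1, 0, 1])) / (2 * t)))
    (hpsd : (M2mat (XofDx m D x) (YofD m) -
        t • M2mat !![a, b; b, c] !![(1 : ℝ), 0; 0, -1]).PosSemidef) :
    c = 0 ∧
    a = 4 * (x ⬝ᵥ D.mulVec x) /
        (((m : ℝ) + 1) * (nTr (wEval (XofDx m D x) (YofD m) [0, 0, 1, 1]) -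
          nTr (wEval (XofDx m D x) (YofD m) [0, 1, 0, 1]))) :=
  stmt12_general m D x t a b c ht hΔpos hb hpsd
end

section
/- Suppose the moment matrix M_n of a truncated tracial sequence β of degree 2n is recursively generated and in canonical form, i.e., satisfies the column relation XY + YX = 0 and one of the column relations Y² = 1 − X², Y² = 1, Y² = 1 + X², Y² = X². Then for every i ∈ {1,…,n−1}, the column relation XⁱY + (−1)^{i+1}·YXⁱ = 0 holds in M_n. -/
open Matrix BigOperators

/-- Column relation `p(𝕏,𝕐) = 0` in the moment matrix `M_n(β)`. -/
def ColRel (n : ℕ) (β : Word → ℝ) (p : Word →₀ ℝ) : Prop :=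
  ∀ v : Word, v.length ≤ n → ∑ w ∈ p.support, p w * β (v.reverse ++ w) = 0

/-- `M_n(β)` is recursively generated: whenever `p(𝕏,𝕐)=0` and `deg(pq) ≤ n`,
also `(pq)(𝕏,𝕐)=0` and `(qp)(𝕏,𝕐)=0`. -/
def RGseq (n : ℕ) (β : Word → ℝ) : Prop :=
  ∀ p q : Word →₀ ℝ, ColRel n β p → PDegLE (polyMul p q) n →
    ColRel n β (polyMul p q) ∧ ColRel n β (polyMul q p)
/-- `M_n(β)` is in canonical form: it satisfies `XY + YX = 0` and one of
`Y² = 1 − X²`, `Y² = 1`, `Y² = 1 + X²`, `Y² = X²`. -/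
def CanonicalForm (n : ℕ) (β : Word → ℝ) : Prop :=
  (∀ v : Word, v.length ≤ n → β (v.reverse ++ [0, 1]) + β (v.reverse ++ [1, 0]) = 0) ∧
  ((∀ v : Word, v.length ≤ n → β (v.reverse ++ [1, 1]) = β v.reverse - β (v.reverse ++ [0, 0])) ∨
   (∀ v : Word, v.length ≤ n → β (v.reverse ++ [1, 1]) = β v.reverse) ∨
   (∀ v : Word, v.length ≤ n → β (v.reverse ++ [1, 1]) = β v.reverse + β (v.reverse ++ [0, 0])) ∨
   (∀ v : Word, v.length ≤ n → β (v.reverse ++ [1, 1]) = β (v.reverse ++ [0, 0])))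



lemma polyMul_single_left_s14 (v : Word) (q : Word →₀ ℝ) :
    polyMul (Finsupp.single v 1) q = q.mapDomain (v ++ ·) := by
  unfold polyMul
  rw [Finsupp.sum_single_index (by simp)]
  simp [Finsupp.mapDomain]

lemma polyMul_single_right (p : Word →₀ ℝ) (w : Word) :
    polyMul p (Finsupp.single w 1) = p.mapDomain (· ++ w) := by
  unfold polyMul
  rw [Finsupp.mapDomain]
  apply Finsupp.sum_congr
  intro v _
  rw [Finsupp.sum_single_index (by simp)]
  simp

lemma colRel_two (n : ℕ) (β : Word → ℝ) (u1 u2 : Word) :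
    ColRel n β (Finsupp.single u1 1 + Finsupp.single u2 1) ↔
      ∀ v : Word, v.length ≤ n → β (v.reverse ++ u1) + β (v.reverse ++ u2) = 0 := by
  have key : ∀ v : Word,
      (∑ w ∈ (Finsupp.single u1 (1:ℝ) + Finsupp.single u2 1).support,
        ((Finsupp.single u1 (1:ℝ) + Finsupp.single u2 1 : Word →₀ ℝ)) w * β (v.reverse ++ w))
      = β (v.reverse ++ u1) + β (v.reverse ++ u2) := by
    intro v
    have : (∑ w ∈ (Finsupp.single u1 (1:ℝ) + Finsupp.single u2 1).support,
        ((Finsupp.single u1 (1:ℝ) + Finsupp.single u2 1 : Word →₀ ℝ)) w * β (v.reverse ++ w))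
        = (Finsupp.single u1 (1:ℝ) + Finsupp.single u2 1).sum
            (fun w c => c * β (v.reverse ++ w)) := rfl
    rw [this, Finsupp.sum_add_index' (by simp) (by intros; ring),
      Finsupp.sum_single_index (by simp), Finsupp.sum_single_index (by simp)]
    ring
  constructor
  · intro h v hv; rw [← key v]; exact h v hv
  · intro h v hv; rw [key v]; exact h v hv

lemma pdeg_two (u1 u2 : Word) (k : ℕ) (h1 : u1.length ≤ k) (h2 : u2.length ≤ k) :
    PDegLE (Finsupp.single u1 (1:ℝ) + Finsupp.single u2 1) k := by
  intro w hw
  have := Finsupp.support_add hw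
  simp only [Finset.mem_union] at this
  rcases this with h | h <;>
    [skip; skip] <;>
    · have := Finsupp.support_single_subset h
      simp at this
      subst this
      assumption

lemma step_rel (n : ℕ) (β : Word → ℝ) (hrg : RGseq n β)
    (h0 : ∀ v : Word, v.length ≤ n → β (v.reverse ++ [0, 1]) + β (v.reverse ++ [1, 0]) = 0)
    (a b : ℕ) (hab : a + b + 2 ≤ n) :
    ∀ v : Word, v.length ≤ n →
      β (v.reverse ++ (List.replicate (a+1) 0 ++ (1:Fin 2) :: List.replicate b 0)) +
      β (v.reverse ++ (List.replicate a 0 ++ (1:Fin 2) :: List.replicate (b+1) 0)) = 0 := by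
  have hp0 : ColRel n β (Finsupp.single [0,1] 1 + Finsupp.single [1,0] 1) :=
    (colRel_two n β [0,1] [1,0]).mpr h0
  set qb : Word →₀ ℝ := Finsupp.single (List.replicate b 0) 1 with hqb
  have hmul1 : polyMul (Finsupp.single ([0,1]:Word) 1 + Finsupp.single [1,0] 1) qb
      = Finsupp.single (([0,1]:Word) ++ List.replicate b 0) 1
        + Finsupp.single (([1,0]:Word) ++ List.replicate b 0) 1 := by
    rw [hqb, polyMul_single_right, Finsupp.mapDomain_add, Finsupp.mapDomain_single,
      Finsupp.mapDomain_single]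
  have hdeg1 : PDegLE (polyMul (Finsupp.single ([0,1]:Word) 1 + Finsupp.single [1,0] 1) qb) n := by
    rw [hmul1]; apply pdeg_two <;> simp <;> omega
  have hr := (hrg _ qb hp0 hdeg1).1
  rw [hmul1] at hr
  set qa : Word →₀ ℝ := Finsupp.single (List.replicate a 0) 1 with hqa
  have hmul2 : polyMul qa (Finsupp.single (([0,1]:Word) ++ List.replicate b 0) 1
        + Finsupp.single (([1,0]:Word) ++ List.replicate b 0) 1)
      = Finsupp.single (List.replicate a 0 ++ (([0,1]:Word) ++ List.replicate b 0)) 1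
        + Finsupp.single (List.replicate a 0 ++ (([1,0]:Word) ++ List.replicate b 0)) 1 := by
    rw [hqa, polyMul_single_left_s14, Finsupp.mapDomain_add, Finsupp.mapDomain_single,
      Finsupp.mapDomain_single]
  have hdeg2 : PDegLE (polyMul (Finsupp.single (([0,1]:Word) ++ List.replicate b 0) 1
        + Finsupp.single (([1,0]:Word) ++ List.replicate b 0) 1) qa) n := by
    rw [hqa, polyMul_single_right, Finsupp.mapDomain_add, Finsupp.mapDomain_single,
      Finsupp.mapDomain_single]
    apply pdeg_two <;> simp <;> omega
  have hr2 := (hrg _ qa hr hdeg2).2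
  rw [hmul2] at hr2
  have hcol := (colRel_two n β _ _).mp hr2
  intro v hv
  have h := hcol v hv
  have e1 : List.replicate a (0:Fin 2) ++ (([0,1]:Word) ++ List.replicate b 0)
      = List.replicate (a+1) 0 ++ (1:Fin 2) :: List.replicate b 0 := by
    rw [List.replicate_succ']; simp
  have e2 : List.replicate a (0:Fin 2) ++ (([1,0]:Word) ++ List.replicate b 0)
      = List.replicate a 0 ++ (1:Fin 2) :: List.replicate (b+1) 0 := by
    rw [List.replicate_succ]; simp
  rw [e1, e2] at h
  exact h


theorem stmt14aux (n : ℕ) (β : Word → ℝ) (hrg : RGseq n β)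
    (hcan1 : ∀ v : Word, v.length ≤ n → β (v.reverse ++ [0, 1]) + β (v.reverse ++ [1, 0]) = 0) :
    ∀ i : ℕ, 1 ≤ i → i < n →
      ∀ v : Word, v.length ≤ n →
        β (v.reverse ++ (List.replicate i 0 ++ [1])) +
          (-1 : ℝ) ^ (i + 1) * β (v.reverse ++ ((1 : Fin 2) :: List.replicate i 0)) = 0 := by
  intro i hi1 hin v hv
  have key : ∀ j, j ≤ i →
      β (v.reverse ++ (List.replicate (i-j) 0 ++ (1:Fin 2) :: List.replicate j 0))
      = (-1:ℝ)^j * β (v.reverse ++ (List.replicate i 0 ++ [1])) := by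
    intro j
    induction j with
    | zero => intro _; simp
    | succ j ih =>
      intro hj
      have ihj := ih (by omega)
      obtain ⟨k, hk⟩ : ∃ k, i - j = k + 1 := ⟨i - j - 1, by omega⟩
      have hk2 : i - (j+1) = k := by omega
      have hstep := step_rel n β hrg hcan1 k j (by omega) v hv
      rw [hk] at ihj
      rw [hk2]
      have hneg : β (v.reverse ++ (List.replicate k 0 ++ (1:Fin 2) :: List.replicate (j+1) 0))
          = - β (v.reverse ++ (List.replicate (k+1) 0 ++ (1:Fin 2) :: List.replicate j 0)) := by
        linarith
      rw [hneg, ihj]; ring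
  have h0 := key i le_rfl
  simp only [Nat.sub_self] at h0
  have h0' : β (v.reverse ++ ((1:Fin 2) :: List.replicate i 0))
      = (-1:ℝ)^i * β (v.reverse ++ (List.replicate i 0 ++ [1])) := by simpa using h0
  rw [h0', ← mul_assoc, ← pow_add]
  have hodd : ((-1:ℝ))^(i + 1 + i) = -1 := Odd.neg_one_pow ⟨i, by ring⟩
  rw [hodd]; ring

theorem stmt14 (n : ℕ) (β : Word → ℝ) (hβ : IsTracialSeq n β) (hrg : RGseq n β)
    (hcan : CanonicalForm n β) :
    ∀ i : ℕ, 1 ≤ i → i < n →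
      ∀ v : Word, v.length ≤ n →
        β (v.reverse ++ (List.replicate i 0 ++ [1])) +
          (-1 : ℝ) ^ (i + 1) * β (v.reverse ++ ((1 : Fin 2) :: List.replicate i 0)) = 0 := by
  exact stmt14aux n β hrg hcan.1
end
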